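/- arXiv:math/0701374 — 4 statements merged into one kernel-verified Lean document; each statement's English description precedes it below -/
import Mathlib

section
/- A finitely determined power structure over a ring R is uniquely determined by the family of series (1−t)^{−m} for m ∈ R: if two finitely determined power structures agree on the series (1−t)^{−m} for all m ∈ R, then they agree on all pairs (A(t), m). -/
/-!
Every `A ∈ 1 + tR[[t]]` agrees up to degree `k` with a finite product `∏_{j ≤ k} (1 - t^j)^{a_j}`
formed in the first power structure: since `(1 - t^j)^a = 1 - a t^j + O(t^{j+1})`, the exponent
`a_j` can be chosen to correct the `j`-th coefficient. On such a product both structures agree,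
because `(B C)^m = B^m C^m` and `((1 - t^j)^a)^m = (1 - t^j)^{m a}` reduce it to the series
`(1 - t^j)^{b}`, which the substitution axiom determines from `(1 - t)^{b}`. Finite determinacy then
transfers the agreement from the product to `A`, one jet at a time.
-/

open PowerSeries

/-- A power structure over a commutative ring `R`: a map
`(1 + tR[[t]]) × R → 1 + tR[[t]]`, `(A, m) ↦ A^m`, satisfying the seven axioms
of Gusein-Zade–Luengo–Melle-Hernández.  The substitution axiom
`A(t^k)^m = (A(t)^m)|_{t → t^k}` is stated coefficientwise. -/
structure PowerStructure (R : Type*) [CommRing R] where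
  pow : PowerSeries R → R → PowerSeries R
  constantCoeff_pow : ∀ A : PowerSeries R, constantCoeff A = 1 → ∀ m : R,
    constantCoeff (pow A m) = 1
  pow_zero : ∀ A : PowerSeries R, constantCoeff A = 1 → pow A 0 = 1
  pow_one : ∀ A : PowerSeries R, constantCoeff A = 1 → pow A 1 = A
  mul_pow : ∀ A B : PowerSeries R, constantCoeff A = 1 → constantCoeff B = 1 →
    ∀ m : R, pow (A * B) m = pow A m * pow B m
  pow_add : ∀ A : PowerSeries R, constantCoeff A = 1 → ∀ m n : R,
    pow A (m + n) = pow A m * pow A n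
  pow_mul : ∀ A : PowerSeries R, constantCoeff A = 1 → ∀ m n : R,
    pow A (m * n) = pow (pow A n) m
  coeff_one_pow : ∀ m : R, coeff 1 (pow (1 + X) m) = m
  pow_subst : ∀ (A B : PowerSeries R) (k : ℕ), 1 ≤ k → constantCoeff A = 1 →
    (∀ n : ℕ, coeff (k * n) B = coeff n A) →
    (∀ n : ℕ, ¬ k ∣ n → coeff n B = 0) →
    ∀ m : R, (∀ n : ℕ, coeff (k * n) (pow B m) = coeff n (pow A m)) ∧
      (∀ n : ℕ, ¬ k ∣ n → coeff n (pow B m) = 0)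

/-- A power structure is finitely determined if for every `N` there is `M` such
that the `N`-jet of `A(t)^m` only depends on the `M`-jet of `A(t)`. -/
def PowerStructure.FinitelyDetermined {R : Type*} [CommRing R]
    (P : PowerStructure R) : Prop :=
  ∀ N : ℕ, ∃ M : ℕ, ∀ A B : PowerSeries R, constantCoeff A = 1 →
    constantCoeff B = 1 → (∀ i ≤ M, coeff i A = coeff i B) →
    ∀ m : R, ∀ i ≤ N, coeff i (P.pow A m) = coeff i (P.pow B m)

namespace PowerSeries

variable {R : Type*} [CommRing R]

lemma coeff_one_mul_eq (B C : R⟦X⟧) :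
    coeff 1 (B * C) = constantCoeff B * coeff 1 C + coeff 1 B * constantCoeff C := by
  simp [coeff_mul, Finset.Nat.antidiagonal_succ, coeff_zero_eq_constantCoeff]

lemma constantCoeff_one_sub_X_pow {k : ℕ} (hk : k ≠ 0) :
    constantCoeff (1 - X ^ k : R⟦X⟧) = 1 := by
  simp [zero_pow hk]

lemma coeff_mul_one_sub_X_pow {k : ℕ} (hk : k ≠ 0) (n : ℕ) :
    coeff (k * n) (1 - X ^ k : R⟦X⟧) = coeff n (1 - X) := by
  simp [coeff_one, coeff_X_pow, coeff_X, hk, Nat.mul_eq_left hk]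

lemma coeff_one_sub_X_pow_of_not_dvd {k n : ℕ} (hn : ¬ k ∣ n) :
    coeff n (1 - X ^ k : R⟦X⟧) = 0 := by
  have h0 : n ≠ 0 := by rintro rfl; exact hn (dvd_zero k)
  have hk : n ≠ k := by rintro rfl; exact hn dvd_rfl
  simp [coeff_one, coeff_X_pow, h0, hk]

end PowerSeries

namespace PowerStructure

variable {R : Type*} [CommRing R] (P : PowerStructure R)

lemma one_pow (m : R) : P.pow 1 m = 1 := by
  have h1 : constantCoeff (1 : R⟦X⟧) = 1 := map_one _
  simpa [P.pow_zero 1 h1] using (P.pow_mul 1 h1 m 0).symm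

lemma pow_one_sub_X_pow_subst {k : ℕ} (hk : 0 < k) (m : R) :
    (∀ n, coeff (k * n) (P.pow (1 - X ^ k) m) = coeff n (P.pow (1 - X) m)) ∧
      ∀ n, ¬ k ∣ n → coeff n (P.pow (1 - X ^ k) m) = 0 :=
  P.pow_subst (1 - X) (1 - X ^ k) k hk (by simp) (coeff_mul_one_sub_X_pow hk.ne')
    (fun _ ↦ coeff_one_sub_X_pow_of_not_dvd) m

/-- `(1 - t)^m (1 + t)^m = (1 - t²)^m` has no linear term, while `(1 + t)^m = 1 + m t + O(t²)`. -/
lemma coeff_one_pow_one_sub_X (m : R) : coeff 1 (P.pow (1 - X) m) = -m := by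
  have hA : constantCoeff (1 - X : R⟦X⟧) = 1 := by simp
  have hB : constantCoeff (1 + X : R⟦X⟧) = 1 := by simp
  have hlin : coeff 1 (P.pow (1 - X ^ 2) m) = 0 :=
    (P.pow_one_sub_X_pow_subst two_pos m).2 1 (by norm_num)
  rw [show (1 - X ^ 2 : R⟦X⟧) = (1 - X) * (1 + X) by ring, P.mul_pow _ _ hA hB,
    coeff_one_mul_eq, P.constantCoeff_pow _ hA, P.constantCoeff_pow _ hB, P.coeff_one_pow] at hlin
  linear_combination hlin

lemma exists_pow_one_sub_X_pow_eq {k : ℕ} (hk : 0 < k) (m : R) :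
    ∃ D : R⟦X⟧, P.pow (1 - X ^ k) m = 1 + X ^ k * D ∧ constantCoeff D = -m := by
  obtain ⟨hmul, hoff⟩ := P.pow_one_sub_X_pow_subst hk m
  have hdvd : X ^ k ∣ P.pow (1 - X ^ k) m - 1 := by
    refine X_pow_dvd_iff.mpr fun n hn ↦ ?_
    rcases Nat.eq_zero_or_pos n with rfl | hn0
    · simp [P.constantCoeff_pow _ (constantCoeff_one_sub_X_pow hk.ne')]
    · have hndvd : ¬ k ∣ n := fun hkn ↦ (Nat.le_of_dvd hn0 hkn).not_gt hn
      simp [hoff n hndvd, coeff_one, hn0.ne']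
  obtain ⟨D, hD⟩ := hdvd
  refine ⟨D, by rw [← hD]; ring, ?_⟩
  have hk1 := congrArg (coeff k) hD
  rw [coeff_X_pow_mul', if_pos le_rfl, Nat.sub_self, coeff_zero_eq_constantCoeff] at hk1
  rw [← hk1, map_sub, coeff_one, if_neg hk.ne', sub_zero, ← coeff_one_pow_one_sub_X P m]
  simpa using hmul 1

variable (A : R⟦X⟧)

/-- The product `∏_{j=1}^{k} (1 - t^j)^{a_j}` in `P`, with the exponents `a_j` chosen one at a
time so that it agrees with `A` up to degree `k`. -/
noncomputable def approx : ℕ → R⟦X⟧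
  | 0 => 1
  | k + 1 => approx k * P.pow (1 - X ^ (k + 1)) (coeff (k + 1) (approx k) - coeff (k + 1) A)

lemma constantCoeff_approx (k : ℕ) : constantCoeff (P.approx A k) = 1 := by
  induction k with
  | zero => exact map_one _
  | succ k ih =>
    rw [approx, map_mul, ih, P.constantCoeff_pow _ (constantCoeff_one_sub_X_pow k.succ_ne_zero),
      one_mul]

lemma coeff_approx (hA : constantCoeff A = 1) (k : ℕ) :
    ∀ j ≤ k, coeff j (P.approx A k) = coeff j A := by
  induction k with
  | zero =>
    intro j hj
    rw [Nat.le_zero.mp hj, coeff_zero_eq_constantCoeff, constantCoeff_approx, hA]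
  | succ k ih =>
    intro j hj
    set a := coeff (k + 1) (P.approx A k) - coeff (k + 1) A
    obtain ⟨D, hD, hD0⟩ := P.exists_pow_one_sub_X_pow_eq (k := k + 1) k.succ_pos a
    have hstep : P.approx A (k + 1) = P.approx A k + X ^ (k + 1) * (P.approx A k * D) := by
      rw [approx, hD]; ring
    rw [hstep, map_add, coeff_X_pow_mul']
    rcases (Nat.le_succ_iff.mp hj) with hjk | rfl
    · rw [if_neg (by omega), add_zero, ih j hjk]
    · rw [if_pos le_rfl, Nat.sub_self, coeff_zero_eq_constantCoeff, map_mul,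
        constantCoeff_approx, hD0]
      ring

end PowerStructure

section Uniqueness

variable {R : Type*} [CommRing R] {P Q : PowerStructure R}

lemma PowerStructure.pow_one_sub_X_pow_eq_of_forall
    (h : ∀ m, P.pow (1 - X) m = Q.pow (1 - X) m) {k : ℕ} (hk : 0 < k) (m : R) :
    P.pow (1 - X ^ k) m = Q.pow (1 - X ^ k) m := by
  obtain ⟨hP, hP'⟩ := P.pow_one_sub_X_pow_subst hk m
  obtain ⟨hQ, hQ'⟩ := Q.pow_one_sub_X_pow_subst hk m
  ext n
  by_cases hkn : k ∣ n
  · obtain ⟨c, rfl⟩ := hkn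
    rw [hP, hQ, h]
  · rw [hP' n hkn, hQ' n hkn]

lemma PowerStructure.pow_approx_eq_of_forall
    (h : ∀ m, P.pow (1 - X) m = Q.pow (1 - X) m) (A : R⟦X⟧) (k : ℕ) (m : R) :
    P.pow (P.approx A k) m = Q.pow (P.approx A k) m := by
  induction k generalizing m with
  | zero => exact (P.one_pow m).trans (Q.one_pow m).symm
  | succ k ih =>
    set a := coeff (k + 1) (P.approx A k) - coeff (k + 1) A
    have hB := P.constantCoeff_approx A k
    have hC := constantCoeff_one_sub_X_pow (R := R) k.succ_ne_zero
    have hsubst := pow_one_sub_X_pow_eq_of_forall h k.succ_pos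
    calc P.pow (P.approx A (k + 1)) m
        = P.pow (P.approx A k) m * P.pow (P.pow (1 - X ^ (k + 1)) a) m :=
          P.mul_pow _ _ hB (P.constantCoeff_pow _ hC a) m
      _ = Q.pow (P.approx A k) m * Q.pow (Q.pow (1 - X ^ (k + 1)) a) m := by
          rw [ih, ← P.pow_mul _ hC, ← Q.pow_mul _ hC, hsubst]
      _ = Q.pow (P.approx A (k + 1)) m := by
          rw [approx, hsubst, Q.mul_pow _ _ hB (Q.constantCoeff_pow _ hC a)]

end Uniqueness

/-- A finitely determined power structure over `R` is uniquely
determined by the series `(1 - t)^{-m}`, `m ∈ R`: two finitely determined power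
structures agreeing on `(1-t)^{-m}` for every `m ∈ R` agree everywhere. -/
theorem finitelyDetermined_powerStructure_unique {R : Type*} [CommRing R]
    (P₁ P₂ : PowerStructure R) (h₁ : P₁.FinitelyDetermined)
    (h₂ : P₂.FinitelyDetermined)
    (h : ∀ m : R, P₁.pow (1 - X) (-m) = P₂.pow (1 - X) (-m)) :
    ∀ (A : PowerSeries R) (m : R), constantCoeff A = 1 →
      P₁.pow A m = P₂.pow A m := by
  have h' (m : R) : P₁.pow (1 - X) m = P₂.pow (1 - X) m := by simpa using h (-m)
  intro A m hA
  ext N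
  obtain ⟨M₁, hM₁⟩ := h₁ N
  obtain ⟨M₂, hM₂⟩ := h₂ N
  set B := P₁.approx A (max M₁ M₂)
  have hB := P₁.constantCoeff_approx A (max M₁ M₂)
  have hAB (i : ℕ) (hi : i ≤ max M₁ M₂) : coeff i A = coeff i B :=
    (P₁.coeff_approx A hA _ i hi).symm
  calc coeff N (P₁.pow A m)
      = coeff N (P₁.pow B m) :=
        hM₁ A B hA hB (fun i hi ↦ hAB i (le_max_of_le_left hi)) m N le_rfl
    _ = coeff N (P₂.pow B m) := by rw [P₁.pow_approx_eq_of_forall h']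
    _ = coeff N (P₂.pow A m) :=
        (hM₂ A B hA hB (fun i hi ↦ hAB i (le_max_of_le_right hi)) m N le_rfl).symm
end

section
/- Newton approximation for plane curve germs (Lemma 4): let f, g ∈ ℂ[[x,y]] with g(γ(t)) = 0 for an arc γ(t) = (x(t), y(t)) ∈ (tℂ[[t]])², suppose the n-jets of f and g coincide, let m = ord₀ γ, Q = min(ord₀ f_x(γ(t)), ord₀ f_y(γ(t))), and assume n > 4Q. Then there exists an arc γ′(t) with f(γ′(t)) = 0 whose (mn−Q)-jet coincides with that of γ. -/
open PowerSeries

/-- Evaluation `f(γ(t))` of a two-variable power series `f ∈ ℂ[[x,y]]` along an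
arc `γ(t) = (x(t), y(t))` with `x(0) = y(0) = 0` (the coefficient of `t^n` only
involves monomials of total degree `≤ n`). -/
noncomputable def evalArc (γ : PowerSeries ℂ × PowerSeries ℂ)
    (f : MvPowerSeries (Fin 2) ℂ) : PowerSeries ℂ :=
  PowerSeries.mk fun n => ∑ a ∈ Finset.range (n + 1), ∑ b ∈ Finset.range (n + 1),
    MvPowerSeries.coeff (Finsupp.single 0 a + Finsupp.single 1 b) f *
      PowerSeries.coeff n (γ.1 ^ a * γ.2 ^ b)

/-- Partial derivative `∂f/∂x_i` of `f ∈ ℂ[[x,y]]`. -/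
noncomputable def pd (i : Fin 2) (f : MvPowerSeries (Fin 2) ℂ) :
    MvPowerSeries (Fin 2) ℂ :=
  fun m => ((m i : ℂ) + 1) * MvPowerSeries.coeff (m + Finsupp.single i 1) f

/-!
Since `m ≥ 1` and `n > 4Q`, the arc is already an approximate root: `f(γ) = (f - g)(γ)` has
order at least `m(n + 1) > 2Q`. After swapping the variables if necessary,
`ord f_y(γ) = Q`, and Newton's method in `y`, `y ↦ y - f(x, y) / f_y(x, y)`, converges
`t`-adically: if `ord f(x, y) ≥ c > 2Q`, the correction has order at least `c - Q`, so it does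
not change `f_y(x, y)` up to order `Q`, and by Taylor's formula to first order the new value of
`f` has order at least `2(c - Q) > c`. The limit is a root that agrees with `y` up to order
`m(n + 1) - Q`.
-/

open Finset

theorem dvd_pow_mul_pow_sub {R : Type*} [CommRing R] {d x x' y y' : R} (hx : d ∣ x - x')
    (hy : d ∣ y - y') (a b : ℕ) : d ∣ x ^ a * y ^ b - x' ^ a * y' ^ b := by
  rw [show x ^ a * y ^ b - x' ^ a * y' ^ b = x ^ a * (y ^ b - y' ^ b) + (x ^ a - x' ^ a) * y' ^ b
    by ring]
  exact dvd_add (dvd_mul_of_dvd_right (hy.trans (sub_dvd_pow_sub_pow _ _ _)) _)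
    (dvd_mul_of_dvd_left (hx.trans (sub_dvd_pow_sub_pow _ _ _)) _)

theorem pow_add_dvd_pow_mul_pow {M : Type*} [CommMonoid M] {d x y : M} (hx : d ∣ x)
    (hy : d ∣ y) (a b : ℕ) : d ^ (a + b) ∣ x ^ a * y ^ b :=
  pow_add d a b ▸ mul_dvd_mul (pow_dvd_pow_of_dvd hx a) (pow_dvd_pow_of_dvd hy b)

theorem sq_dvd_add_pow_sub_pow_sub {R : Type*} [CommRing R] (y ε : R) (b : ℕ) :
    ε ^ 2 ∣ (y + ε) ^ b - y ^ b - b * y ^ (b - 1) * ε := by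
  obtain ⟨k, hk⟩ := Polynomial.powAddExpansion y ε b
  exact ⟨k, by rw [hk]; ring⟩

theorem MvPowerSeries.coeff_rename_equiv {σ τ R : Type*} [CommSemiring R] (e : σ ≃ τ)
    (f : MvPowerSeries σ R) (d : τ →₀ ℕ) :
    coeff d (rename e f) = coeff (d.equivMapDomain e.symm) f := by
  have hd : d = (d.equivMapDomain e.symm).embDomain e.toEmbedding := by
    ext i
    simp [Finsupp.embDomain_eq_mapDomain, Finsupp.mapDomain_equiv_apply]
  conv_lhs => rw [hd]
  exact coeff_embDomain_rename _ _ _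

namespace PowerSeries

theorem X_pow_dvd_of_le_order {R : Type*} [Semiring R] {φ : R⟦X⟧} {n : ℕ}
    (h : (n : ℕ∞) ≤ φ.order) : X ^ n ∣ φ :=
  pow_dvd_of_le_emultiplicity (order_eq_emultiplicity_X φ ▸ h)

section Ring

variable {R : Type*} [Ring R]

theorem coeff_eq_of_X_pow_dvd_sub {φ ψ : R⟦X⟧} {N i : ℕ} (h : X ^ N ∣ φ - ψ) (hi : i < N) :
    coeff i φ = coeff i ψ :=
  sub_eq_zero.1 (by rw [← map_sub]; exact X_pow_dvd_iff.1 h i hi)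

theorem order_eq_of_X_pow_dvd_sub {φ ψ : R⟦X⟧} {Q : ℕ} (h : X ^ (Q + 1) ∣ φ - ψ)
    (hψ : ψ.order = Q) : φ.order = Q := by
  have hcoeff : ∀ i ≤ Q, coeff i φ = coeff i ψ := fun i hi =>
    coeff_eq_of_X_pow_dvd_sub h (Nat.lt_succ_of_le hi)
  rw [order_eq_nat] at hψ ⊢
  exact ⟨hcoeff Q le_rfl ▸ hψ.1, fun i hi => hcoeff i hi.le ▸ hψ.2 i hi⟩

theorem eq_zero_of_forall_X_pow_dvd {φ : R⟦X⟧} {e : ℕ} (h : ∀ k, X ^ (e + k) ∣ φ) : φ = 0 := by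
  ext i
  simpa using X_pow_dvd_iff.1 (h (i + 1)) i (by omega)

theorem exists_X_pow_dvd_sub_of_X_pow_dvd_succ_sub {Y : ℕ → R⟦X⟧} {e : ℕ}
    (h : ∀ k, X ^ (e + k) ∣ Y (k + 1) - Y k) : ∃ L, ∀ k, X ^ (e + k) ∣ L - Y k := by
  have hcauchy : ∀ k j, k ≤ j → X ^ (e + k) ∣ Y j - Y k := by
    intro k j hkj
    induction j, hkj using Nat.le_induction with
    | base => simp
    | succ j hkj ih =>
      rw [← sub_add_sub_cancel]
      exact dvd_add ((pow_dvd_pow (X : R⟦X⟧) (by omega)).trans (h j)) ih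
  refine ⟨mk fun i => coeff i (Y (i + 1)), fun k => X_pow_dvd_iff.2 fun i hi => ?_⟩
  rw [map_sub, coeff_mk, sub_eq_zero]
  rcases le_or_gt k (i + 1) with hk | hk
  · exact coeff_eq_of_X_pow_dvd_sub (hcauchy k (i + 1) hk) hi
  · exact (coeff_eq_of_X_pow_dvd_sub (hcauchy (i + 1) k hk.le) (by omega)).symm

end Ring

theorem exists_mul_eq_of_order_eq {k : Type*} [Field k] {u w : k⟦X⟧} {Q c : ℕ}
    (hu : u.order = Q) (hw : X ^ c ∣ w) (hQc : Q ≤ c) :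
    ∃ δ, X ^ (c - Q) ∣ δ ∧ u * δ = w := by
  have hu0 : u ≠ 0 := by rintro rfl; simp at hu
  have hassoc : Associated (X ^ Q) u :=
    ⟨(isUnit_divided_by_X_pow_order hu0).unit,
      by simpa [hu] using X_pow_order_mul_divXPowOrder (f := u)⟩
  obtain ⟨δ, rfl⟩ : u * X ^ (c - Q) ∣ w := by
    rwa [← (hassoc.mul_right _).dvd_iff_dvd_left, ← pow_add, Nat.add_sub_cancel' hQc]
  exact ⟨X ^ (c - Q) * δ, dvd_mul_right _ _, by ring⟩

end PowerSeries

section evalArc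

variable {x y : ℂ⟦X⟧} (f : MvPowerSeries (Fin 2) ℂ)

theorem coeff_evalArc (N : ℕ) :
    coeff N (evalArc (x, y) f) = ∑ a ∈ range (N + 1), ∑ b ∈ range (N + 1),
      MvPowerSeries.coeff (Finsupp.single 0 a + Finsupp.single 1 b) f *
        coeff N (x ^ a * y ^ b) :=
  coeff_mk _ _

theorem coeff_pd (i : Fin 2) (d : Fin 2 →₀ ℕ) :
    MvPowerSeries.coeff d (pd i f) =
      (d i + 1) * MvPowerSeries.coeff (d + Finsupp.single i 1) f :=
  rfl

theorem coeff_pd_one_single_add_single (a b : ℕ) :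
    MvPowerSeries.coeff (Finsupp.single 0 a + Finsupp.single 1 b) (pd 1 f) =
      (b + 1) * MvPowerSeries.coeff (Finsupp.single 0 a + Finsupp.single 1 (b + 1)) f := by
  simp [coeff_pd, add_assoc, ← Finsupp.single_add]

theorem pd_one_rename_swap :
    pd 1 (MvPowerSeries.rename (Equiv.swap 0 1) f) =
      MvPowerSeries.rename (Equiv.swap 0 1) (pd 0 f) := by
  ext d
  simp [coeff_pd, MvPowerSeries.coeff_rename_equiv, Finsupp.equivMapDomain_eq_mapDomain,
    Finsupp.mapDomain_add]

theorem evalArc_rename_swap :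
    evalArc (x, y) (MvPowerSeries.rename (Equiv.swap 0 1) f) = evalArc (y, x) f := by
  ext N
  simp only [coeff_evalArc, MvPowerSeries.coeff_rename_equiv, Equiv.symm_swap,
    Finsupp.equivMapDomain_eq_mapDomain, Finsupp.mapDomain_add, Finsupp.mapDomain_single,
    Equiv.swap_apply_left, Equiv.swap_apply_right]
  rw [sum_comm]
  refine sum_congr rfl fun a _ => sum_congr rfl fun b _ => ?_
  rw [add_comm, mul_comm (x ^ b)]

theorem X_pow_dvd_evalArc_sub_evalArc {x' y' : ℂ⟦X⟧} {N : ℕ} (hx : X ^ N ∣ x - x')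
    (hy : X ^ N ∣ y - y') : X ^ N ∣ evalArc (x, y) f - evalArc (x', y') f := by
  refine X_pow_dvd_iff.2 fun i hi => ?_
  rw [map_sub, sub_eq_zero, coeff_evalArc, coeff_evalArc]
  refine sum_congr rfl fun a _ => sum_congr rfl fun b _ => ?_
  rw [coeff_eq_of_X_pow_dvd_sub (dvd_pow_mul_pow_sub hx hy a b) hi]

theorem X_pow_dvd_evalArc_sub_evalArc_of_coeff_eq {g : MvPowerSeries (Fin 2) ℂ} {m n : ℕ}
    (hx : X ^ m ∣ x) (hy : X ^ m ∣ y)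
    (hfg : ∀ d : Fin 2 →₀ ℕ, d 0 + d 1 ≤ n →
      MvPowerSeries.coeff d f = MvPowerSeries.coeff d g) :
    X ^ (m * (n + 1)) ∣ evalArc (x, y) f - evalArc (x, y) g := by
  refine X_pow_dvd_iff.2 fun i hi => ?_
  rw [map_sub, coeff_evalArc, coeff_evalArc, ← sum_sub_distrib]
  refine sum_eq_zero fun a _ => ?_
  rw [← sum_sub_distrib]
  refine sum_eq_zero fun b _ => ?_
  rcases le_or_gt (a + b) n with hab | hab
  · rw [hfg _ (by simpa using hab), sub_self]
  · have hmon : X ^ (m * (n + 1)) ∣ x ^ a * y ^ b :=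
      (pow_dvd_pow (X : ℂ⟦X⟧) (Nat.mul_le_mul_left m hab)).trans
        (pow_mul (X : ℂ⟦X⟧) m (a + b) ▸ pow_add_dvd_pow_mul_pow hx hy a b)
    rw [X_pow_dvd_iff.1 hmon i hi, mul_zero, mul_zero, sub_zero]

-- Unlike `evalArc`, whose sums depend on the coefficient index, these truncations are
-- polynomials in `x` and `y`, so Taylor's formula for them is an algebraic identity.
noncomputable def evalArcTrunc (A B : ℕ) (x y : ℂ⟦X⟧) : ℂ⟦X⟧ :=
  ∑ a ∈ range A, ∑ b ∈ range B,
    C (MvPowerSeries.coeff (Finsupp.single 0 a + Finsupp.single 1 b) f) * (x ^ a * y ^ b)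

theorem X_pow_dvd_evalArc_sub_evalArcTrunc (hx : X ∣ x) (hy : X ∣ y) {A B N : ℕ}
    (hA : N ≤ A) (hB : N ≤ B) : X ^ N ∣ evalArc (x, y) f - evalArcTrunc f A B x y := by
  refine X_pow_dvd_iff.2 fun i hi => ?_
  have hsub : range (i + 1) ×ˢ range (i + 1) ⊆ range A ×ˢ range B :=
    product_subset_product (range_subset_range.2 (by omega)) (range_subset_range.2 (by omega))
  rw [map_sub, sub_eq_zero, coeff_evalArc, evalArcTrunc, map_sum, ← sum_product',
    sum_subset hsub]
  · simp only [map_sum, coeff_C_mul, sum_product]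
  · rintro ⟨a, b⟩ _ hab
    simp only [mem_product, mem_range, not_and_or, not_lt] at hab
    rw [X_pow_dvd_iff.1 (pow_add_dvd_pow_mul_pow hx hy a b) i (by omega), mul_zero]

theorem evalArcTrunc_add_sub_sub (A B : ℕ) (x y ε : ℂ⟦X⟧) :
    evalArcTrunc f A (B + 1) x (y + ε) - evalArcTrunc f A (B + 1) x y -
        ε * evalArcTrunc (pd 1 f) A B x y =
      ∑ a ∈ range A, ∑ b ∈ range (B + 1),
        C (MvPowerSeries.coeff (Finsupp.single 0 a + Finsupp.single 1 b) f) *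
          (x ^ a * ((y + ε) ^ b - y ^ b - b * y ^ (b - 1) * ε)) := by
  simp only [evalArcTrunc, mul_sum, ← sum_sub_distrib]
  refine sum_congr rfl fun a _ => ?_
  simp only [mul_sub, sum_sub_distrib]
  congr 1
  rw [sum_range_succ', Nat.cast_zero, zero_mul, zero_mul, mul_zero, mul_zero, add_zero]
  refine sum_congr rfl fun b _ => ?_
  rw [coeff_pd_one_single_add_single, map_mul, map_add, map_natCast, map_one,
    Nat.add_sub_cancel]
  push_cast
  ring

theorem X_pow_dvd_evalArc_add_sub_sub (hx : X ∣ x) (hy : X ∣ y) {ε : ℂ⟦X⟧} {e : ℕ}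
    (hε : X ^ e ∣ ε) :
    X ^ (2 * e) ∣ evalArc (x, y + ε) f - evalArc (x, y) f - ε * evalArc (x, y) (pd 1 f) := by
  rcases Nat.eq_zero_or_pos e with rfl | he
  · simp
  have hyε : X ∣ y + ε := dvd_add hy ((dvd_pow_self X he.ne').trans hε)
  have hsq : X ^ (2 * e) ∣ ε ^ 2 := by
    rw [mul_comm, pow_mul]
    exact pow_dvd_pow_of_dvd hε 2
  have hpoly : X ^ (2 * e) ∣ evalArcTrunc f (2 * e) (2 * e + 1) x (y + ε) -
      evalArcTrunc f (2 * e) (2 * e + 1) x y - ε * evalArcTrunc (pd 1 f) (2 * e) (2 * e) x y := by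
    rw [evalArcTrunc_add_sub_sub]
    exact dvd_sum fun a _ => dvd_sum fun b _ => dvd_mul_of_dvd_right
      (dvd_mul_of_dvd_right (hsq.trans (sq_dvd_add_pow_sub_pow_sub y ε b)) _) _
  have h1 := X_pow_dvd_evalArc_sub_evalArcTrunc f hx hyε le_rfl (Nat.le_succ (2 * e))
  have h2 := X_pow_dvd_evalArc_sub_evalArcTrunc f hx hy le_rfl (Nat.le_succ (2 * e))
  have h3 := X_pow_dvd_evalArc_sub_evalArcTrunc (pd 1 f) hx hy (le_refl (2 * e)) le_rfl
  convert ((h1.sub h2).sub (dvd_mul_of_dvd_left h3 ε)).add hpoly using 1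
  ring

theorem exists_newton_correction (hx : X ∣ x) (hy : X ∣ y) {Q c : ℕ}
    (hQ : (evalArc (x, y) (pd 1 f)).order = Q) (hQc : Q ≤ c) (hc : X ^ c ∣ evalArc (x, y) f) :
    ∃ δ, X ^ (c - Q) ∣ δ ∧ X ^ (2 * (c - Q)) ∣ evalArc (x, y - δ) f := by
  obtain ⟨δ, hδ, hδu⟩ := exists_mul_eq_of_order_eq hQ hc hQc
  refine ⟨δ, hδ, ?_⟩
  have htaylor := X_pow_dvd_evalArc_add_sub_sub f hx hy (dvd_neg.2 hδ)
  rwa [← sub_eq_add_neg, neg_mul, mul_comm δ, hδu, sub_neg_eq_add, sub_add_cancel] at htaylor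

theorem exists_newton_iterate (hx : X ∣ x) (hy : X ∣ y) {Q c : ℕ}
    (hQ : (evalArc (x, y) (pd 1 f)).order = Q) (hc : 2 * Q < c) {k : ℕ} {z : ℂ⟦X⟧}
    (hzy : X ^ (c - Q) ∣ z - y) (hz : X ^ (c + k) ∣ evalArc (x, z) f) :
    ∃ z', X ^ (c - Q) ∣ z' - y ∧ X ^ (c + k + 1) ∣ evalArc (x, z') f ∧
      X ^ (c - Q + k) ∣ z' - z := by
  have hz₁ : X ∣ z := by
    rw [← sub_add_cancel z y]
    exact dvd_add ((dvd_pow_self X (by omega)).trans hzy) hy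
  have hQz : (evalArc (x, z) (pd 1 f)).order = Q :=
    order_eq_of_X_pow_dvd_sub (X_pow_dvd_evalArc_sub_evalArc _ (by simp)
      ((pow_dvd_pow X (by omega)).trans hzy)) hQ
  obtain ⟨δ, hδ, hzδ⟩ := exists_newton_correction f hx hz₁ hQz (by omega) hz
  refine ⟨z - δ, ?_, (pow_dvd_pow X (by omega)).trans hzδ, ?_⟩
  · rw [sub_right_comm]
    exact dvd_sub hzy ((pow_dvd_pow X (by omega)).trans hδ)
  · rw [sub_sub_cancel_left, dvd_neg]
    exact (pow_dvd_pow X (by omega)).trans hδ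

theorem exists_evalArc_eq_zero (hx : X ∣ x) (hy : X ∣ y) {Q c : ℕ}
    (hQ : (evalArc (x, y) (pd 1 f)).order = Q) (hc : 2 * Q < c) (hw : X ^ c ∣ evalArc (x, y) f) :
    ∃ y', evalArc (x, y') f = 0 ∧ X ^ (c - Q) ∣ y' - y := by
  choose! next hnext using fun k z (h : X ^ (c - Q) ∣ z - y ∧ X ^ (c + k) ∣ evalArc (x, z) f) =>
    exists_newton_iterate f hx hy hQ hc h.1 h.2
  let Y : ℕ → ℂ⟦X⟧ := fun k => Nat.rec y next k
  have hY : ∀ k, X ^ (c - Q) ∣ Y k - y ∧ X ^ (c + k) ∣ evalArc (x, Y k) f := fun k =>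
    Nat.rec ⟨by simp [Y], by simpa [Y] using hw⟩
      (fun k ih => ⟨(hnext k _ ih).1, (hnext k _ ih).2.1⟩) k
  obtain ⟨L, hL⟩ :=
    exists_X_pow_dvd_sub_of_X_pow_dvd_succ_sub (Y := Y) fun k => (hnext k _ (hY k)).2.2
  refine ⟨L, eq_zero_of_forall_X_pow_dvd (e := c - Q) fun k => ?_, by simpa [Y] using hL 0⟩
  rw [← sub_add_cancel (evalArc (x, L) f) (evalArc (x, Y k) f)]
  exact dvd_add (X_pow_dvd_evalArc_sub_evalArc f (by simp) (hL k))
    ((pow_dvd_pow X (by omega)).trans (hY k).2)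

end evalArc

/-- Lemma 4, Newton approximation: if `g(γ(t)) = 0`, the `n`-jets
of `f` and `g` coincide, `m = ord₀ γ`,
`Q = min(ord₀ f_x(γ(t)), ord₀ f_y(γ(t)))` and `n > 4Q`, then there is an arc
`γ'` with `f(γ'(t)) = 0` whose `(mn - Q)`-jet coincides with that of `γ`. -/
theorem newton_approximation_of_jet_solution
    (f g : MvPowerSeries (Fin 2) ℂ) (x y : PowerSeries ℂ)
    (hx0 : constantCoeff x = 0) (hy0 : constantCoeff y = 0)
    (hg : evalArc (x, y) g = 0)
    (n : ℕ)
    (hjet : ∀ d : Fin 2 →₀ ℕ, d 0 + d 1 ≤ n →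
      MvPowerSeries.coeff d f = MvPowerSeries.coeff d g)
    (m : ℕ) (hm : min x.order y.order = (m : ℕ∞))
    (Q : ℕ)
    (hQ : min (evalArc (x, y) (pd 0 f)).order (evalArc (x, y) (pd 1 f)).order
      = (Q : ℕ∞))
    (hn : n > 4 * Q) :
    ∃ x' y' : PowerSeries ℂ, constantCoeff x' = 0 ∧ constantCoeff y' = 0 ∧
      evalArc (x', y') f = 0 ∧
      ∀ i ≤ m * n - Q, coeff i x' = coeff i x ∧ coeff i y' = coeff i y := by
  have hm1 : 1 ≤ m := by
    rw [← Nat.one_le_cast (α := ℕ∞), ← hm]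
    exact le_min (one_le_order_iff_constCoeff_eq_zero.2 hx0)
      (one_le_order_iff_constCoeff_eq_zero.2 hy0)
  have hxm : X ^ m ∣ x := X_pow_dvd_of_le_order (hm ▸ min_le_left _ _)
  have hym : X ^ m ∣ y := X_pow_dvd_of_le_order (hm ▸ min_le_right _ _)
  have hw : X ^ (m * (n + 1)) ∣ evalArc (x, y) f := by
    simpa [hg] using X_pow_dvd_evalArc_sub_evalArc_of_coeff_eq f hxm hym hjet
  have hc : 2 * Q < m * (n + 1) := by nlinarith
  have hagree {a b : ℂ⟦X⟧} (h : X ^ (m * (n + 1) - Q) ∣ a - b) (i : ℕ) (hi : i ≤ m * n - Q) :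
      coeff i a = coeff i b :=
    coeff_eq_of_X_pow_dvd_sub h (by rw [mul_add_one] at hc ⊢; omega)
  have hconst {a b : ℂ⟦X⟧} (h : X ^ (m * (n + 1) - Q) ∣ a - b) (hb : constantCoeff b = 0) :
      constantCoeff a = 0 := by
    rw [← coeff_zero_eq_constantCoeff_apply, hagree h 0 (Nat.zero_le _),
      coeff_zero_eq_constantCoeff_apply, hb]
  rcases min_choice (evalArc (x, y) (pd 0 f)).order (evalArc (x, y) (pd 1 f)).order
    with hQx | hQy
  · rw [hQx, ← evalArc_rename_swap, ← pd_one_rename_swap] at hQ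
    rw [← evalArc_rename_swap] at hw
    obtain ⟨x', hx', hxx'⟩ := exists_evalArc_eq_zero _ (X_dvd_iff.2 hy0) (X_dvd_iff.2 hx0) hQ hc hw
    rw [evalArc_rename_swap] at hx'
    exact ⟨x', y, hconst hxx' hx0, hy0, hx', fun i hi => ⟨hagree hxx' i hi, rfl⟩⟩
  · rw [hQy] at hQ
    obtain ⟨y', hy', hyy'⟩ := exists_evalArc_eq_zero f (X_dvd_iff.2 hx0) (X_dvd_iff.2 hy0) hQ hc hw
    exact ⟨x, y', hx0, hconst hyy' hy0, hy', fun i hi => ⟨rfl, hagree hyy' i hi⟩⟩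
end

section
/- Behavior of P − v under blow-up for an irreducible germ: if γ is an irreducible plane curve germ of multiplicity v with strict transform γ̂ under blowing up the origin (in the chart y = θx, with f̂ = x^{−v} f(x, θx)), then P(γ̂) − v(γ̂) = P(γ) − v(γ) − v(v−1). -/
/-!
Along a branch `γ` of `f = 0`, differentiating `f(γ(t)) = 0` gives
`x' f_x(γ) + y' f_y(γ) = 0`, hence `ord f_x(γ) + ord x = ord f_y(γ) + ord y`.
Since `x^v f̂(x, θ) = f(x, θx)`, the strict transform `γ̂ = (x, θ)` is a branch of `f̂ = 0`,
so the same relation holds along `γ̂` with `θ` in place of `y`; differentiating the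
blow-up relation in `θ` gives `x^v f̂_θ(γ̂) = x f_y(γ)`. With `ord y = v + ord θ`, these
three relations give `P = ord f_y(γ)`, `P̂ + v = ord f̂_θ(γ̂) + v̂` and
`ord f̂_θ(γ̂) + v² = ord f_y(γ) + v`, which combine to the claim.
-/

open PowerSeries

/-- Substitution `f(u, w)` of two power series `u, w ∈ ℂ[[x,y]]` without
constant term into `f ∈ ℂ[[x,y]]`. -/
noncomputable def evalPair (u w : MvPowerSeries (Fin 2) ℂ)
    (f : MvPowerSeries (Fin 2) ℂ) : MvPowerSeries (Fin 2) ℂ :=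
  fun m => ∑ a ∈ Finset.range (m 0 + m 1 + 1), ∑ b ∈ Finset.range (m 0 + m 1 + 1),
    MvPowerSeries.coeff (Finsupp.single 0 a + Finsupp.single 1 b) f *
      MvPowerSeries.coeff m (u ^ a * w ^ b)

theorem Derivation.map_aeval_eq_sum_pderiv {R A σ : Type*} [CommSemiring R] [CommSemiring A]
    [Algebra R A] [Fintype σ] (D : Derivation R A A) (a : σ → A) (p : MvPolynomial σ R) :
    D (MvPolynomial.aeval a p) = ∑ i, MvPolynomial.aeval a (MvPolynomial.pderiv i p) * D (a i) := by
  classical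
  induction p using MvPolynomial.induction_on with
  | C r => simp
  | add p q hp hq => simp [hp, hq, Finset.sum_add_distrib, add_mul]
  | mul_X p j hp =>
    simp only [map_mul, MvPolynomial.aeval_X, Derivation.leibniz, hp, MvPolynomial.pderiv_X,
      smul_eq_mul, map_add, add_mul, Finset.sum_add_distrib, Finset.mul_sum]
    simp [Pi.single_apply, mul_assoc]

namespace MvPowerSeries

variable {σ τ R : Type*}

section CommSemiring

variable [CommSemiring R] [Finite σ]

theorem truncTotal_coe_truncTotal_of_le {m n : ℕ} (h : n ≤ m) (f : MvPowerSeries σ R) :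
    truncTotal n (truncTotal m f : MvPowerSeries σ R) = truncTotal n f := by
  ext d
  simp only [coeff_truncTotal_eq_ite, MvPolynomial.coeff_coe]
  split_ifs <;> first | rfl | omega

theorem truncTotal_pderiv_congr {n : ℕ} {f g : MvPowerSeries σ R} (i : σ)
    (h : truncTotal (n + 1) f = truncTotal (n + 1) g) :
    truncTotal n (pderiv R i f) = truncTotal n (pderiv R i g) := by
  ext d
  simp only [coeff_truncTotal_eq_ite, coeff_pderiv]
  split_ifs with hd
  · have hcoeff := congrArg (MvPolynomial.coeff (d + Finsupp.single i 1)) h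
    rw [coeff_truncTotal _ (by simpa using hd), coeff_truncTotal _ (by simpa using hd)] at hcoeff
    rw [hcoeff]
  · rfl

theorem truncTotal_mul_congr {n : ℕ} {f f' g g' : MvPowerSeries σ R}
    (h : truncTotal n f = truncTotal n g) (h' : truncTotal n f' = truncTotal n g') :
    truncTotal n (f * f') = truncTotal n (g * g') := by
  ext d
  simp only [coeff_truncTotal_eq_ite]
  split_ifs with hd
  · rw [← coeff_truncTotal_mul_truncTotal_eq_coeff_mul _ _ hd, h, h',
      coeff_truncTotal_mul_truncTotal_eq_coeff_mul _ _ hd]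
  · rfl

end CommSemiring

variable [CommRing R]

theorem truncTotal_subst_congr [Finite σ] [Finite τ] {n : ℕ} {a : σ → MvPowerSeries τ R}
    (ha : ∀ i, constantCoeff (a i) = 0) {f g : MvPowerSeries σ R}
    (h : truncTotal n f = truncTotal n g) :
    truncTotal n (subst a f) = truncTotal n (subst a g) := by
  rw [truncTotal_subst_eq_truncTotal_truncTotal_subst ha, h,
    ← truncTotal_subst_eq_truncTotal_truncTotal_subst ha]

theorem pderiv_subst [Fintype σ] [Finite τ] {a : σ → MvPowerSeries τ R}
    (ha : ∀ i, constantCoeff (a i) = 0) (f : MvPowerSeries σ R) (j : τ) :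
    pderiv R j (subst a f) = ∑ i, subst a (pderiv R i f) * pderiv R j (a i) := by
  -- Up to total degree `e.degree`, both sides only see the truncation `p` of `f`
  -- at degree `e.degree + 2`, for which this is the chain rule for polynomials.
  ext e
  set n := e.degree + 1
  set p : MvPolynomial σ R := truncTotal (n + 1) f
  have hp : truncTotal (n + 1) f = truncTotal (n + 1) (p : MvPowerSeries σ R) :=
    (truncTotal_coe_truncTotal_of_le le_rfl f).symm
  have hpoly : pderiv R j (subst a (p : MvPowerSeries σ R))
      = ∑ i, subst a (pderiv R i (p : MvPowerSeries σ R)) * pderiv R j (a i) := by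
    simp only [subst_coe, pderiv_coe]
    exact Derivation.map_aeval_eq_sum_pderiv _ a p
  have htrunc : truncTotal n (pderiv R j (subst a f))
      = truncTotal n (∑ i, subst a (pderiv R i f) * pderiv R j (a i)) := by
    rw [truncTotal_pderiv_congr j (truncTotal_subst_congr ha hp), hpoly, map_sum, map_sum]
    exact Finset.sum_congr rfl fun i _ =>
      truncTotal_mul_congr (truncTotal_subst_congr ha (truncTotal_pderiv_congr i hp)).symm rfl
  have hdeg : e.degree < n := Nat.lt_succ_self _
  simpa only [coeff_truncTotal _ hdeg] using congrArg (MvPolynomial.coeff e) htrunc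

theorem coeff_pow_mul_pow_eq_zero {a : Fin 2 → MvPowerSeries τ R}
    (ha : ∀ i, constantCoeff (a i) = 0) {e : τ →₀ ℕ} {i j : ℕ} (h : e.degree < i + j) :
    coeff e (a 0 ^ i * a 1 ^ j) = 0 := by
  refine coeff_of_lt_order (lt_of_lt_of_le ?_ le_order_mul)
  refine lt_of_lt_of_le ?_ (add_le_add (le_order_pow_of_constantCoeff_eq_zero i (ha 0))
    (le_order_pow_of_constantCoeff_eq_zero j (ha 1)))
  exact_mod_cast h

open _root_.Finset in
theorem coeff_subst_fin_two {a : Fin 2 → MvPowerSeries τ R} (ha : ∀ i, constantCoeff (a i) = 0)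
    (f : MvPowerSeries (Fin 2) R) {e : τ →₀ ℕ} {N : ℕ} (hN : e.degree ≤ N) :
    coeff e (subst a f) = ∑ i ∈ range (N + 1), ∑ j ∈ range (N + 1),
      coeff (Finsupp.single 0 i + Finsupp.single 1 j) f * coeff e (a 0 ^ i * a 1 ^ j) := by
  have hprod (d : Fin 2 →₀ ℕ) : d.prod (fun s n => a s ^ n) = a 0 ^ d 0 * a 1 ^ d 1 := by
    rw [Finsupp.prod_fintype _ _ (fun _ => pow_zero _), Fin.prod_univ_two]
  let S := (range (N + 1) ×ˢ range (N + 1)).image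
    (fun p : ℕ × ℕ => Finsupp.single (0 : Fin 2) p.1 + Finsupp.single 1 p.2)
  have hsupp : Function.support (fun d => coeff d f • coeff e (d.prod fun s n => a s ^ n))
      ⊆ (S : Set (Fin 2 →₀ ℕ)) := by
    intro d hne
    rw [Function.mem_support, hprod] at hne
    have hle : d 0 + d 1 ≤ N := by
      by_contra! hlt
      exact hne (by rw [coeff_pow_mul_pow_eq_zero ha (by omega), smul_zero])
    refine mem_image.mpr ⟨(d 0, d 1), by simp only [mem_product, mem_range]; omega, ?_⟩
    ext s; fin_cases s <;> simp
  have hinj : Set.InjOn (fun p : ℕ × ℕ => Finsupp.single (0 : Fin 2) p.1 + Finsupp.single 1 p.2)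
      ↑(range (N + 1) ×ˢ range (N + 1)) := by
    rintro ⟨i, j⟩ - ⟨i', j'⟩ - h
    have h0 := congrArg (· 0) h
    have h1 := congrArg (· 1) h
    simp only [Finsupp.add_apply, Finsupp.single_apply] at h0 h1
    simp_all
  rw [coeff_subst (hasSubst_of_constantCoeff_zero ha), finsum_eq_sum_of_support_subset _ hsupp,
    sum_image hinj, sum_product]
  refine sum_congr rfl fun i _ => sum_congr rfl fun j _ => ?_
  rw [hprod, smul_eq_mul]
  simp

section Blowup

variable {x θ : MvPowerSeries τ R}

theorem hasSubst_pair (hx : constantCoeff x = 0) (hθ : constantCoeff θ = 0) :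
    HasSubst ![x, θ] :=
  hasSubst_of_constantCoeff_zero fun i => by fin_cases i <;> assumption

theorem subst_pair_X_zero_pow_mul (hx : constantCoeff x = 0) (hθ : constantCoeff θ = 0) (n : ℕ)
    (g : MvPowerSeries (Fin 2) R) :
    subst ![x, θ] (X 0 ^ n * g) = x ^ n * subst ![x, θ] g := by
  simp [subst_mul (hasSubst_pair hx hθ), subst_pow (hasSubst_pair hx hθ),
    subst_X (hasSubst_pair hx hθ)]

theorem subst_pair_X_zero_mul (hx : constantCoeff x = 0) (hθ : constantCoeff θ = 0)
    (g : MvPowerSeries (Fin 2) R) : subst ![x, θ] (X 0 * g) = x * subst ![x, θ] g := by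
  simpa using subst_pair_X_zero_pow_mul hx hθ 1 g

theorem subst_subst_blowup (hx : constantCoeff x = 0) (hθ : constantCoeff θ = 0)
    (g : MvPowerSeries (Fin 2) R) :
    subst ![x, θ] (subst ![X 0, X 1 * X 0] g : MvPowerSeries (Fin 2) R) = subst ![x, x * θ] g := by
  have hxθ := hasSubst_pair hx hθ
  rw [subst_comp_subst_apply (hasSubst_of_constantCoeff_zero fun i => by fin_cases i <;> simp) hxθ]
  congr 1
  funext i
  fin_cases i <;> simp [subst_mul hxθ, subst_X hxθ, mul_comm]

theorem subst_eq_of_blowup (hx : constantCoeff x = 0) (hθ : constantCoeff θ = 0)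
    {v : ℕ} {f fhat : MvPowerSeries (Fin 2) R}
    (hblow : X 0 ^ v * fhat = subst ![X 0, X 1 * X 0] f) :
    x ^ v * subst ![x, θ] fhat = subst ![x, x * θ] f := by
  rw [← subst_pair_X_zero_pow_mul hx hθ, hblow, subst_subst_blowup hx hθ]

theorem pderiv_one_subst_blowup (g : MvPowerSeries (Fin 2) R) :
    pderiv R 1 (subst ![X 0, X 1 * X 0] g : MvPowerSeries (Fin 2) R)
      = X 0 * subst ![X 0, X 1 * X 0] (pderiv R 1 g) := by
  rw [pderiv_subst (a := ![X 0, X 1 * X 0]) (fun i => by fin_cases i <;> simp) g 1,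
    Fin.sum_univ_two]
  simp [Derivation.leibniz, mul_comm]

theorem subst_pderiv_one_eq_of_blowup (hx : constantCoeff x = 0) (hθ : constantCoeff θ = 0)
    {v : ℕ} {f fhat : MvPowerSeries (Fin 2) R}
    (hblow : X 0 ^ v * fhat = subst ![X 0, X 1 * X 0] f) :
    x ^ v * subst ![x, θ] (pderiv R 1 fhat) = x * subst ![x, x * θ] (pderiv R 1 f) := by
  have h := congrArg (fun g => subst ![x, θ] (pderiv R 1 g)) hblow
  rwa [Derivation.leibniz, pderiv_pow, pderiv_X_of_ne (by decide), mul_zero, smul_zero, add_zero,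
    smul_eq_mul, pderiv_one_subst_blowup, subst_pair_X_zero_pow_mul hx hθ,
    subst_pair_X_zero_mul hx hθ, subst_subst_blowup hx hθ] at h

end Blowup

end MvPowerSeries

namespace PowerSeries

variable {R : Type*}

theorem derivative_eq_pderiv [CommSemiring R] (φ : R⟦X⟧) :
    derivative R φ = MvPowerSeries.pderiv R () φ := by
  ext n
  change _ = MvPowerSeries.coeff (Finsupp.single () n) _
  rw [coeff_derivative, MvPowerSeries.coeff_pderiv, ← Finsupp.single_add]
  simp [PowerSeries.coeff]

theorem derivative_mvSubst {σ : Type*} [CommRing R] [Fintype σ] {a : σ → R⟦X⟧}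
    (ha : ∀ i, constantCoeff (a i) = 0) (f : MvPowerSeries σ R) :
    derivative R (MvPowerSeries.subst a f)
      = ∑ i, MvPowerSeries.subst a (MvPowerSeries.pderiv R i f) * derivative R (a i) := by
  simp only [derivative_eq_pderiv]
  exact MvPowerSeries.pderiv_subst ha f ()

variable [CommRing R] [IsDomain R] [CharZero R]

theorem order_derivative_add_one {φ : R⟦X⟧} (hφ : constantCoeff φ = 0) :
    (derivative R φ).order + 1 = φ.order := by
  rcases eq_or_ne φ 0 with rfl | hne
  · simp
  obtain ⟨n, hn⟩ := ENat.ne_top_iff_exists.mp (order_eq_top.not.mpr hne)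
  obtain ⟨m, rfl⟩ : ∃ m, n = m + 1 := Nat.exists_eq_add_one.mpr <| by
    have h := one_le_order_iff_constCoeff_eq_zero.mpr hφ
    rw [← hn] at h
    exact_mod_cast h
  obtain ⟨hm, hlt⟩ := order_eq_nat.mp hn.symm
  have hderiv : (derivative R φ).order = m := by
    refine order_eq_nat.mpr ⟨?_, fun i hi => ?_⟩
    · rw [coeff_derivative]
      exact mul_ne_zero hm (Nat.cast_add_one_ne_zero m)
    · rw [coeff_derivative, hlt (i + 1) (by omega), zero_mul]
  rw [hderiv, ← hn]
  rfl

theorem order_add_order_eq_of_derivative {x y u w : R⟦X⟧} (hx : constantCoeff x = 0)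
    (hy : constantCoeff y = 0) (h : u * derivative R x + w * derivative R y = 0) :
    u.order + x.order = w.order + y.order := by
  rw [← order_derivative_add_one hx, ← order_derivative_add_one hy, ← add_assoc, ← add_assoc,
    ← order_mul, ← order_mul, eq_neg_of_add_eq_zero_left h, order_neg]

theorem order_subst_pderiv_add_order_eq {x y : R⟦X⟧} (hx : constantCoeff x = 0)
    (hy : constantCoeff y = 0) {f : MvPowerSeries (Fin 2) R}
    (hf : MvPowerSeries.subst ![x, y] f = 0) :
    order (MvPowerSeries.subst ![x, y] (MvPowerSeries.pderiv R 0 f)) + x.order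
      = order (MvPowerSeries.subst ![x, y] (MvPowerSeries.pderiv R 1 f)) + y.order := by
  have hchain := derivative_mvSubst (a := ![x, y]) (fun i => by fin_cases i <;> assumption) f
  rw [hf, map_zero, Fin.sum_univ_two] at hchain
  exact order_add_order_eq_of_derivative hx hy (by simpa using hchain.symm)

end PowerSeries

theorem evalArc_eq_subst {x y : PowerSeries ℂ} (hx : constantCoeff x = 0)
    (hy : constantCoeff y = 0) (f : MvPowerSeries (Fin 2) ℂ) :
    evalArc (x, y) f = MvPowerSeries.subst ![x, y] f := by
  ext n
  rw [evalArc, coeff_mk]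
  change _ = MvPowerSeries.coeff (Finsupp.single () n) _
  rw [MvPowerSeries.coeff_subst_fin_two (fun i => by fin_cases i <;> assumption) f
    (N := n) (by simp)]
  rfl

theorem evalPair_eq_subst {u w : MvPowerSeries (Fin 2) ℂ}
    (hu : MvPowerSeries.constantCoeff u = 0) (hw : MvPowerSeries.constantCoeff w = 0)
    (f : MvPowerSeries (Fin 2) ℂ) :
    evalPair u w f = MvPowerSeries.subst ![u, w] f := by
  ext m
  rw [MvPowerSeries.coeff_subst_fin_two (fun i => by fin_cases i <;> assumption) f
    (N := m 0 + m 1) (by simp [Finsupp.degree_eq_sum])]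
  rfl

theorem pd_eq_pderiv (i : Fin 2) (f : MvPowerSeries (Fin 2) ℂ) :
    pd i f = MvPowerSeries.pderiv ℂ i f := by
  ext m
  rw [MvPowerSeries.coeff_pderiv, mul_comm]
  rfl

/-- `U, W` are the orders of `f_x, f_y` along `γ`, `U', W'` those of `f̂_x, f̂_θ` along `γ̂`,
and `T` is the order of `θ`. -/
theorem ENat.min_add_mul_self_eq_min_add_min {v : ℕ} {T U W U' W' : ℕ∞}
    (hγ : U + v = W + (v + T)) (hγ' : U' + v = W' + T) (hw : v * v + W' = v + W) :
    min U' W' + v * v = min U W + min (v : ℕ∞) T := by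
  have hU : U = W + T :=
    ENat.add_left_injective_of_ne_top (ENat.natCast_ne_top v) (by simp only [hγ]; ring)
  rw [hU, min_eq_right le_self_add]
  refine ENat.add_left_injective_of_ne_top (ENat.natCast_ne_top v) ?_
  calc min U' W' + v * v + v = min (U' + v) (W' + v) + v * v := by
        rw [min_add_add_right]; ring
    _ = (v * v + W') + min (v : ℕ∞) T := by
        rw [hγ', min_add_add_left, min_comm]; ring
    _ = W + min (v : ℕ∞) T + v := by rw [hw]; ring

theorem P_sub_v_blowup_general
    (f fhat : MvPowerSeries (Fin 2) ℂ) (x y θ : PowerSeries ℂ)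
    (hx0 : constantCoeff x = 0) (hy0 : constantCoeff y = 0)
    (hθ0 : constantCoeff θ = 0)
    (hf : evalArc (x, y) f = 0)
    (v : ℕ) (hvx : x.order = (v : ℕ∞))
    (hstrict : x * θ = y)
    (hblow : (MvPowerSeries.X 0 : MvPowerSeries (Fin 2) ℂ) ^ v * fhat =
      evalPair (MvPowerSeries.X 0) (MvPowerSeries.X 1 * MvPowerSeries.X 0) f)
    (P Phat vhat : ℕ)
    (hP : min (evalArc (x, y) (pd 0 f)).order (evalArc (x, y) (pd 1 f)).order
      = (P : ℕ∞))
    (hPhat : min (evalArc (x, θ) (pd 0 fhat)).order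
      (evalArc (x, θ) (pd 1 fhat)).order = (Phat : ℕ∞))
    (hvhat : min x.order θ.order = (vhat : ℕ∞)) :
    Phat + v + v * (v - 1) = P + vhat := by
  subst hstrict
  simp only [evalArc_eq_subst hx0 hy0, evalArc_eq_subst hx0 hθ0, pd_eq_pderiv] at hf hP hPhat
  rw [evalPair_eq_subst (by simp) (by simp)] at hblow
  have hx : x ≠ 0 := by rintro rfl; simp at hvx
  have hfhat : MvPowerSeries.subst ![x, θ] fhat = 0 :=
    (mul_eq_zero.mp ((MvPowerSeries.subst_eq_of_blowup hx0 hθ0 hblow).trans hf)).resolve_left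
      (pow_ne_zero v hx)
  have hγ := order_subst_pderiv_add_order_eq hx0 hy0 hf
  have hγ' := order_subst_pderiv_add_order_eq hx0 hθ0 hfhat
  have hw := congrArg order (MvPowerSeries.subst_pderiv_one_eq_of_blowup hx0 hθ0 hblow)
  rw [order_mul, hvx] at hγ
  rw [hvx] at hγ' hvhat
  rw [order_mul, order_mul, order_pow, hvx, nsmul_eq_mul] at hw
  have key := ENat.min_add_mul_self_eq_min_add_min hγ hγ' hw
  rw [hP, hPhat, hvhat] at key
  have hv : v + v * (v - 1) = v * v := by
    rw [Nat.mul_sub_one]; have := Nat.le_mul_self v; omega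
  rw [add_assoc, hv]
  exact_mod_cast key

/-- behaviour of `P - v` under blow-up: let `γ = (x(t), y(t))`
be an irreducible plane curve germ with `f(γ(t)) ≡ 0`, multiplicity
`v = ord x(t) ≤ ord y(t)`, and let `γ̂ = (x(t), θ(t))` with `x(t)θ(t) = y(t)`
be the strict transform under blowing up the origin in the chart `y = θx`,
with equation `f̂(x,θ) = x^{-v} f(x, θx)`.  Then
`P(γ̂) - v(γ̂) = P(γ) - v(γ) - v(v-1)`, where
`P = min(ord f_x(γ), ord f_y(γ))` and `v` is the order of the arc. -/
theorem P_sub_v_blowup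
    (f fhat : MvPowerSeries (Fin 2) ℂ) (x y θ : PowerSeries ℂ)
    (hx0 : constantCoeff x = 0) (hy0 : constantCoeff y = 0)
    (hθ0 : constantCoeff θ = 0)
    (hf : evalArc (x, y) f = 0)
    (v : ℕ) (hv1 : 1 ≤ v) (hvx : x.order = (v : ℕ∞)) (hvxy : x.order ≤ y.order)
    (hstrict : x * θ = y)
    (hblow : (MvPowerSeries.X 0 : MvPowerSeries (Fin 2) ℂ) ^ v * fhat =
      evalPair (MvPowerSeries.X 0) (MvPowerSeries.X 1 * MvPowerSeries.X 0) f)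
    (P Phat vhat : ℕ)
    (hP : min (evalArc (x, y) (pd 0 f)).order (evalArc (x, y) (pd 1 f)).order
      = (P : ℕ∞))
    (hPhat : min (evalArc (x, θ) (pd 0 fhat)).order
      (evalArc (x, θ) (pd 1 fhat)).order = (Phat : ℕ∞))
    (hvhat : min x.order θ.order = (vhat : ℕ∞)) :
    Phat + v + v * (v - 1) = P + vhat :=
  P_sub_v_blowup_general f fhat x y θ hx0 hy0 hθ0 hf v hvx hstrict hblow P Phat vhat hP hPhat hvhat
end

section
/- Modality of the singularity x^p + y^q for coprime p, q: m = pq/2 − 3p/2 − 3q/2 + 7/2 + ⌊q/p⌋, and this number equals the number of integer lattice points (x,y) with 0 ≤ x ≤ q−2, 0 ≤ y ≤ p−2 lying strictly above the line px + qy = pq (Kouchnirenko's formula). -/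
/-!
The point reflection `(x, y) ↦ (q - x, p - y)` of the open rectangle `(0, q) × (0, p)` exchanges
the lattice points above and below the line `px + qy = pq`, and by coprimality no lattice point
of the open rectangle lies on that line; so exactly `(p - 1)(q - 1)/2` of them lie above it.
The rectangle `[0, q - 2] × [0, p - 2]` of the statement misses, among the points above the
line, the `p - 1` points of the column `x = q - 1` and the `q - 2 - ⌊q/p⌋` points of the row
`y = p - 1`. Since `(p + 1)(q + 1) = (p - 1)(q - 1) + 2(p + q)`, the division by `2` in `c` is
exact and both claimed values of `m` follow by arithmetic.
-/

open Finset

namespace Finset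

theorem card_filter_range_succ_product (P : ℕ × ℕ → Prop) [DecidablePred P] (a : ℕ)
    (t : Finset ℕ) :
    #((range (a + 1) ×ˢ t).filter P) = #((range a ×ˢ t).filter P) + #(t.filter (P ⟨a, ·⟩)) := by
  simp only [card_filter, sum_product, sum_range_succ]

theorem card_filter_product_range_succ (P : ℕ × ℕ → Prop) [DecidablePred P] (s : Finset ℕ)
    (b : ℕ) :
    #((s ×ˢ range (b + 1)).filter P) = #((s ×ˢ range b).filter P) + #(s.filter (P ⟨·, b⟩)) := by
  simp only [card_filter, sum_product, sum_range_succ, sum_add_distrib]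

end Finset

def aboveLine (p q : ℕ) (s : Finset (ℕ × ℕ)) : Finset (ℕ × ℕ) :=
  s.filter fun xy => p * q < p * xy.1 + q * xy.2

def belowLine (p q : ℕ) (s : Finset (ℕ × ℕ)) : Finset (ℕ × ℕ) :=
  s.filter fun xy => p * xy.1 + q * xy.2 < p * q

theorem card_aboveLine_eq_card_belowLine (p q : ℕ) :
    #(aboveLine p q (Ioo 0 q ×ˢ Ioo 0 p)) = #(belowLine p q (Ioo 0 q ×ˢ Ioo 0 p)) := by
  have reflect {x y : ℕ} (hx : x ≤ q) (hy : y ≤ p) :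
      p * (q - x) + q * (p - y) + (p * x + q * y) = 2 * (p * q) := by
    zify [hx, hy]; ring
  let σ : ℕ × ℕ → ℕ × ℕ := fun xy => (q - xy.1, p - xy.2)
  refine card_nbij' σ σ ?_ ?_ ?_ ?_ <;> rintro ⟨x, y⟩ <;>
    simp only [σ, aboveLine, belowLine, coe_filter, mem_product, mem_Ioo, Set.mem_ofPred_eq,
      Prod.mk.injEq] <;>
    intro h <;>
    have := reflect (x := x) (y := y) (by omega) (by omega) <;>
    omega

theorem card_aboveLine_add_card_belowLine {p q : ℕ} (hcop : p.Coprime q) :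
    #(aboveLine p q (Ioo 0 q ×ˢ Ioo 0 p)) + #(belowLine p q (Ioo 0 q ×ˢ Ioo 0 p)) =
      (q - 1) * (p - 1) := by
  have hbelow : belowLine p q (Ioo 0 q ×ˢ Ioo 0 p) =
      (Ioo 0 q ×ˢ Ioo 0 p).filter fun xy => ¬ p * q < p * xy.1 + q * xy.2 := by
    refine filter_congr fun ⟨x, y⟩ hxy => ?_
    simp only [mem_product, mem_Ioo] at hxy
    dsimp only
    have := hcop.mul_add_mul_ne_mul (a := x) (b := y) (by omega) (by omega)
    rw [mul_comm x, mul_comm y] at this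
    omega
  rw [hbelow, aboveLine, card_filter_add_card_filter_not, card_product, Nat.card_Ioo,
    Nat.card_Ioo, Nat.sub_zero, Nat.sub_zero]

theorem two_mul_card_aboveLine_Ioo {p q : ℕ} (hcop : p.Coprime q) :
    2 * #(aboveLine p q (Ioo 0 q ×ˢ Ioo 0 p)) = (p - 1) * (q - 1) := by
  rw [two_mul, card_aboveLine_eq_card_belowLine]
  nth_rw 1 [← card_aboveLine_eq_card_belowLine]
  rw [card_aboveLine_add_card_belowLine hcop, mul_comm]

theorem aboveLine_range_product_range_eq_Ioo (p q : ℕ) :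
    aboveLine p q (range q ×ˢ range p) = aboveLine p q (Ioo 0 q ×ˢ Ioo 0 p) := by
  ext ⟨x, y⟩
  simp only [aboveLine, mem_filter, mem_product, mem_range, mem_Ioo]
  constructor
  · rintro ⟨⟨hx, hy⟩, h⟩
    refine ⟨⟨⟨Nat.pos_of_ne_zero ?_, hx⟩, Nat.pos_of_ne_zero ?_, hy⟩, h⟩ <;> rintro rfl <;>
      nlinarith
  · rintro ⟨⟨⟨-, hx⟩, -, hy⟩, h⟩
    exact ⟨⟨hx, hy⟩, h⟩

theorem card_filter_range_mul_lt_mul_pred_add_mul {p q : ℕ} (hpq : p < q) (b : ℕ) :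
    #((range b).filter fun y => p * q < p * (q - 1) + q * y) = b - 1 := by
  have hcolumn : (range b).filter (fun y => p * q < p * (q - 1) + q * y) = Ioo 0 b := by
    ext y
    simp only [mem_filter, mem_range, mem_Ioo, Nat.mul_sub_one]
    have hp : p ≤ p * q := Nat.le_mul_of_pos_right p (by omega)
    constructor
    · rintro ⟨hy, h⟩
      refine ⟨Nat.pos_of_ne_zero ?_, hy⟩
      rintro rfl
      omega
    · rintro ⟨hy₀, hy⟩
      have : q ≤ q * y := Nat.le_mul_of_pos_right q hy₀
      omega
  rw [hcolumn, Nat.card_Ioo, Nat.sub_zero]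

theorem card_filter_range_mul_lt_mul_add_mul_pred {p q : ℕ} (hp : 0 < p) (a : ℕ) :
    #((range a).filter fun x => p * q < p * x + q * (p - 1)) = a - (q / p + 1) := by
  have hrow : (range a).filter (fun x => p * q < p * x + q * (p - 1)) = Ioo (q / p) a := by
    ext x
    simp only [mem_filter, mem_range, mem_Ioo, Nat.mul_sub_one, Nat.div_lt_iff_lt_mul hp]
    have hq : q ≤ p * q := Nat.le_mul_of_pos_left q hp
    have := mul_comm x p
    have := mul_comm q p
    omega
  rw [hrow, Nat.card_Ioo, Nat.sub_sub, add_comm]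

theorem card_aboveLine_range_product_range {p q : ℕ} (hp : 0 < p) (hpq : p < q) :
    #(aboveLine p q (range q ×ˢ range p)) =
      #(aboveLine p q (range (q - 1) ×ˢ range (p - 1))) + (q - 1 - (q / p + 1)) + (p - 1) := by
  have hrange_q : range q = range (q - 1 + 1) := by rw [Nat.sub_add_cancel (by omega)]
  have hrange_p : range p = range (p - 1 + 1) := by rw [Nat.sub_add_cancel hp]
  rw [aboveLine, hrange_q, hrange_p, card_filter_range_succ_product, card_filter_product_range_succ,
    card_filter_range_mul_lt_mul_pred_add_mul hpq, card_filter_range_mul_lt_mul_add_mul_pred hp,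
    Nat.add_sub_cancel, aboveLine]

/-- modality of `x^p + y^q` and Kouchnirenko's formula: for
coprime `2 ≤ p < q`, the modality `m` of the singularity `x^p + y^q`, obtained
from `μ = c + m - 1` with Milnor number `μ = (p-1)(q-1)` and codimension
`c = (p+1)(q+1)/2 - 2 - ⌊q/p⌋` of the `μ = const` stratum, satisfies
`m = pq/2 - 3p/2 - 3q/2 + 7/2 + ⌊q/p⌋`, and this number equals the number of
integer points `(x,y)` with `0 ≤ x ≤ q-2`, `0 ≤ y ≤ p-2` lying strictly above
the line `px + qy = pq`. -/
theorem modality_xp_yq (p q : ℕ) (hp : 2 ≤ p) (hpq : p < q)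
    (hcop : Nat.Coprime p q) :
    letI c : ℤ := ((p + 1) * (q + 1) : ℤ) / 2 - 2 - (q / p : ℕ)
    letI m : ℤ := ((p - 1) * (q - 1) : ℤ) + 1 - c
    (m : ℚ) = (p * q : ℚ) / 2 - 3 * p / 2 - 3 * q / 2 + 7 / 2 + (q / p : ℕ) ∧
      m = ((Finset.range (q - 1) ×ˢ Finset.range (p - 1)).filter
        (fun xy => p * q < p * xy.1 + q * xy.2)).card := by
  have hA := two_mul_card_aboveLine_Ioo hcop
  have hS := card_aboveLine_range_product_range (by omega) hpq
  rw [aboveLine_range_product_range_eq_Ioo] at hS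
  have hd : q / p + 1 ≤ q - 1 := by
    have := Nat.div_le_div_left (a := q) hp (by omega)
    omega
  set A := #(aboveLine p q (Ioo 0 q ×ˢ Ioo 0 p))
  set d := q / p
  zify [(by omega : 1 ≤ p), (by omega : 1 ≤ q), hd] at hA hS
  have hhalf : ((p + 1) * (q + 1) : ℤ) / 2 = A + p + q := by
    rw [show ((p + 1) * (q + 1) : ℤ) = 2 * (A + p + q) by linear_combination -hA,
      Int.mul_ediv_cancel_left _ two_ne_zero]
  rw [hhalf]
  constructor
  · have hAq : (2 * A : ℚ) = (p - 1) * (q - 1) := by exact_mod_cast hA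
    push_cast
    linear_combination -hAq / 2
  · change _ = ((#(aboveLine p q (range (q - 1) ×ˢ range (p - 1))) : ℕ) : ℤ)
    linear_combination hS - hA
end
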